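/- Per-step inequality for Modified-SGD (key step of Theorem 3): Assume each φ_i is convex and L-Lipschitz and ‖x_i‖ ≤ 1 for all i. Let t ≥ 1, let α_1,…,α_t ∈ ℝ with φ_i*(−α_i) < ∞ for i ≤ t, and set w^(t) = (1/(λt))∑_{i=1}^t α_i x_i. Let α_{t+1} be a maximizer (assumed to exist) of a ↦ −φ_{t+1}*(−a) − (λ(t+1)/2)‖w^(t) + (λ(t+1))^{−1} a x_{t+1}‖². Then (t+1)·D_{t+1}(α_1,…,α_{t+1}) − t·D_t(α_1,…,α_t) ≥ φ_{t+1}(x_{t+1}ᵀ w^(t)) + (λ/2)‖w^(t)‖² − 2L²/((t+1)λ). -/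

import Mathlib

/-!
Let `w = w^(t)`, `z = ⟪x_{t+1}, w⟫` and let `u` be a subgradient of `φ_{t+1}` at `z`, so that
`φ_{t+1}*(u) = z u - φ_{t+1}(z)` (Fenchel–Young). Lipschitz continuity makes `φ*` infinite
outside `[-L, L]`, so `u`, all `α_i` and `α_{t+1}` lie in `[-L, L]`, whence `λ ‖w‖ ≤ L`.
Comparing the greedy choice `α_{t+1}` with `-u` bounds the maximized objective below by
`φ_{t+1}(z) - (λ(t+1)/2)‖w‖² - u²‖x_{t+1}‖²/(2λ(t+1))`. The increment `(t+1) D_{t+1} - t D_t`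
equals that objective up to terms of size `O(1/(λ(t+1)))`, and the bounds above make their
total at least `-2L²/((t+1)λ)`.
-/

open scoped BigOperators RealInnerProductSpace
open Finset

/-- The convex conjugate `φ*(u) = sup_z (z*u - φ z)` (as a real number; junk value
when the supremum is not finite). -/
noncomputable def fconj (φ : ℝ → ℝ) (u : ℝ) : ℝ := ⨆ z : ℝ, (z * u - φ z)

/-- `φ*(u) < ∞`, i.e. the defining supremum of the conjugate is finite. -/
def FiniteConj (φ : ℝ → ℝ) (u : ℝ) : Prop :=
  BddAbove (Set.range fun z => z * u - φ z)

/-- `w^(t) = (1/(λ t)) ∑_{i=1}^t α_i x_i`. -/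
noncomputable def wpart {d : ℕ} (lam : ℝ) (x : ℕ → EuclideanSpace ℝ (Fin d))
    (t : ℕ) (α : ℕ → ℝ) : EuclideanSpace ℝ (Fin d) :=
  (1 / (lam * (t : ℝ))) • ∑ i ∈ Finset.Icc 1 t, α i • x i

/-- The partial dual objective `D_t(α) = (1/t) ∑_{i=1}^t -φ_i*(-α_i) - (λ/2)‖w^(t)‖²`. -/
noncomputable def Dpart {d : ℕ} (lam : ℝ) (x : ℕ → EuclideanSpace ℝ (Fin d))
    (φ : ℕ → ℝ → ℝ) (t : ℕ) (α : ℕ → ℝ) : ℝ :=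
  (1 / (t : ℝ)) * ∑ i ∈ Finset.Icc 1 t, -(fconj (φ i) (-(α i)))
    - lam / 2 * ‖wpart lam x t α‖ ^ 2

theorem ConvexOn.exists_subgradient {φ : ℝ → ℝ} (hφ : ConvexOn ℝ Set.univ φ) (z : ℝ) :
    ∃ u : ℝ, ∀ y, φ z + u * (y - z) ≤ φ y := by
  have hz : z ∈ interior Set.univ := by simp
  refine ⟨derivWithin φ (Set.Ioi z) z, fun y => ?_⟩
  rcases lt_trichotomy y z with hyz | rfl | hzy
  · have h := (hφ.slope_le_leftDeriv_of_mem_interior (Set.mem_univ y) hz hyz).trans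
      (hφ.leftDeriv_le_rightDeriv_of_mem_interior hz)
    rw [slope_def_field, div_le_iff₀ (sub_pos.2 hyz)] at h
    linarith
  · simp
  · have h := hφ.rightDeriv_le_slope_of_mem_interior hz (Set.mem_univ y) hzy
    rw [slope_def_field, le_div_iff₀ (sub_pos.2 hzy)] at h
    linarith

section Conjugate

variable {φ : ℝ → ℝ} {u z : ℝ}

theorem finiteConj_of_subgradient (hu : ∀ y, φ z + u * (y - z) ≤ φ y) : FiniteConj φ u :=
  ⟨z * u - φ z, by rintro _ ⟨y, rfl⟩; linarith [hu y]⟩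

theorem fconj_eq_of_subgradient (hu : ∀ y, φ z + u * (y - z) ≤ φ y) :
    fconj φ u = z * u - φ z :=
  le_antisymm (ciSup_le fun y => by linarith [hu y])
    (le_ciSup (finiteConj_of_subgradient hu) z)

theorem abs_le_of_finiteConj {L : ℝ} (hL : ∀ a b : ℝ, |φ a - φ b| ≤ L * |a - b|)
    (h : FiniteConj φ u) : |u| ≤ L := by
  obtain ⟨M, hM⟩ := h
  by_contra! hLu
  have hL0 : 0 ≤ L := by simpa using (abs_nonneg _).trans (hL 0 1)
  have hk : 0 < |u| * (|u| - L) := mul_pos (hL0.trans_lt hLu) (sub_pos.2 hLu)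
  -- along the ray `s * u` the function `y ↦ y * u - φ y` grows at rate at least `|u| (|u| - L)`
  set s := (|M| + |φ 0| + 1) / (|u| * (|u| - L))
  have hs : 0 ≤ s := by positivity
  have hsk : s * (|u| * (|u| - L)) = |M| + |φ 0| + 1 := div_mul_cancel₀ _ hk.ne'
  have hlip : φ (s * u) ≤ φ 0 + L * (s * |u|) := by
    have := (le_abs_self _).trans (hL (s * u) 0)
    rw [sub_zero, abs_mul, abs_of_nonneg hs] at this
    linarith
  have hgrowth : s * u * u - L * (s * |u|) = |M| + |φ 0| + 1 := by
    rw [← hsk, mul_assoc s u u, ← abs_mul_abs_self u]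
    ring
  have hM' : s * u * u - φ (s * u) ≤ M := hM ⟨s * u, rfl⟩
  linarith [le_abs_self M, le_abs_self (φ 0)]

end Conjugate

theorem Finset.sum_Icc_succ_top_update {M β : Type*} [AddCommMonoid M] {a t : ℕ}
    (hat : a ≤ t + 1) (f : ℕ → β → M) (α : ℕ → β) (b : β) :
    ∑ i ∈ Icc a (t + 1), f i (Function.update α (t + 1) b i) =
      ∑ i ∈ Icc a t, f i (α i) + f (t + 1) b := by
  rw [sum_Icc_succ_top hat, Function.update_self]
  congr 1
  refine sum_congr rfl fun i hi => ?_
  rw [Function.update_of_ne (by grind)]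

section Inner

variable {E : Type*} [NormedAddCommGroup E] [InnerProductSpace ℝ E]

theorem norm_smul_add_smul_sq (p q : ℝ) (v w : E) :
    ‖p • v + q • w‖ ^ 2 = p ^ 2 * ‖v‖ ^ 2 + 2 * (p * q) * ⟪v, w⟫ + q ^ 2 * ‖w‖ ^ 2 := by
  rw [norm_add_sq_real, norm_smul, norm_smul, real_inner_smul_left, real_inner_smul_right,
    mul_pow, mul_pow, Real.norm_eq_abs, Real.norm_eq_abs, sq_abs, sq_abs]
  ring

theorem half_mul_norm_add_inv_smul_sq {μ : ℝ} (hμ : μ ≠ 0) (b : ℝ) (w X : E) :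
    μ / 2 * ‖w + (1 / μ) • b • X‖ ^ 2 =
      μ / 2 * ‖w‖ ^ 2 + b * ⟪X, w⟫ + b ^ 2 * ‖X‖ ^ 2 / (2 * μ) := by
  rw [smul_smul, ← one_smul ℝ w, norm_smul_add_smul_sq, one_smul, real_inner_comm]
  field_simp

theorem sq_mul_norm_sq_add_sq_mul_norm_sq_sub_inner_le {w X : E} {lam u a L : ℝ}
    (hlam : 0 ≤ lam) (hX : ‖X‖ ≤ 1) (hw : lam * ‖w‖ ≤ L) (hu : |u| ≤ L) (ha : |a| ≤ L) :
    u ^ 2 * ‖X‖ ^ 2 + (lam ^ 2 * ‖w‖ ^ 2 - 2 * lam * a * ⟪X, w⟫) ≤ 4 * L ^ 2 := by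
  have hL : 0 ≤ L := (abs_nonneg a).trans ha
  have huX : (u * ‖X‖) ^ 2 ≤ L ^ 2 := sq_le_sq.2 <| by
    rw [abs_mul, abs_norm, abs_of_nonneg hL]
    exact (mul_le_of_le_one_right (abs_nonneg u) hX).trans hu
  have hw2 : (lam * ‖w‖) ^ 2 ≤ L ^ 2 := pow_le_pow_left₀ (by positivity) hw 2
  have hinner : lam * |⟪X, w⟫| ≤ L :=
    (mul_le_mul_of_nonneg_left ((abs_real_inner_le_norm X w).trans
      (mul_le_of_le_one_left (norm_nonneg w) hX)) hlam).trans hw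
  have hcross : -(lam * a * ⟪X, w⟫) ≤ L ^ 2 :=
    calc -(lam * a * ⟪X, w⟫) ≤ |lam * a * ⟪X, w⟫| := neg_le_abs _
      _ = |a| * (lam * |⟪X, w⟫|) := by rw [abs_mul, abs_mul, abs_of_nonneg hlam]; ring
      _ ≤ L * L := mul_le_mul ha hinner (by positivity) hL
      _ = L ^ 2 := (sq L).symm
  linarith [mul_pow u ‖X‖ 2, mul_pow lam ‖w‖ 2]

end Inner

section DualObjective

variable {d : ℕ} (lam : ℝ) (x : ℕ → EuclideanSpace ℝ (Fin d)) (φ : ℕ → ℝ → ℝ) (α : ℕ → ℝ)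

theorem smul_wpart {t : ℕ} (h : lam * t ≠ 0) :
    (lam * t) • wpart lam x t α = ∑ i ∈ Icc 1 t, α i • x i := by
  rw [wpart, smul_smul, mul_one_div_cancel h, one_smul]

theorem wpart_succ_update {t : ℕ} (h : lam * t ≠ 0) (a : ℝ) :
    wpart lam x (t + 1) (Function.update α (t + 1) a) =
      (1 / (lam * ((t : ℝ) + 1))) • ((lam * t) • wpart lam x t α + a • x (t + 1)) := by
  rw [wpart, sum_Icc_succ_top_update (by omega) (fun i b => b • x i), smul_wpart lam x α h]
  push_cast
  rfl

theorem mul_norm_wpart_le {t : ℕ} (hlam : 0 < lam) (ht : 0 < t) {L : ℝ}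
    (hα : ∀ i ∈ Icc 1 t, |α i| ≤ L) (hx : ∀ i ∈ Icc 1 t, ‖x i‖ ≤ 1) :
    lam * ‖wpart lam x t α‖ ≤ L := by
  have hsum : ‖∑ i ∈ Icc 1 t, α i • x i‖ ≤ t * L :=
    calc ‖∑ i ∈ Icc 1 t, α i • x i‖ ≤ ∑ _i ∈ Icc 1 t, L := norm_sum_le_of_le _ fun i hi => by
          rw [norm_smul, Real.norm_eq_abs]
          exact (mul_le_of_le_one_right (abs_nonneg _) (hx i hi)).trans (hα i hi)
      _ = t * L := by simp
  have ht' : (0 : ℝ) < t := by exact_mod_cast ht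
  rw [wpart, norm_smul, Real.norm_of_nonneg (by positivity), ← mul_assoc, mul_one_div,
    div_mul_cancel_left₀ hlam.ne', ← div_eq_inv_mul, div_le_iff₀' ht']
  exact hsum

theorem natCast_mul_Dpart {t : ℕ} (ht : t ≠ 0) :
    t * Dpart lam x φ t α =
      ∑ i ∈ Icc 1 t, -fconj (φ i) (-α i) - lam * t / 2 * ‖wpart lam x t α‖ ^ 2 := by
  have ht' : (t : ℝ) ≠ 0 := by exact_mod_cast ht
  rw [Dpart]
  field_simp

/-- Written as the greedy objective plus a correction in which `a` enters only through
`a ⟪x_{t+1}, w⟫`. -/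
theorem succ_mul_Dpart_update_sub {t : ℕ} (hlam : lam ≠ 0) (ht : t ≠ 0) (a : ℝ) :
    ((t : ℝ) + 1) * Dpart lam x φ (t + 1) (Function.update α (t + 1) a) - t * Dpart lam x φ t α =
      -fconj (φ (t + 1)) (-a) - lam * ((t : ℝ) + 1) / 2 *
          ‖wpart lam x t α + (1 / (lam * ((t : ℝ) + 1))) • a • x (t + 1)‖ ^ 2
        + lam * ((t : ℝ) + 1) / 2 * ‖wpart lam x t α‖ ^ 2 + lam / 2 * ‖wpart lam x t α‖ ^ 2
        - (lam ^ 2 * ‖wpart lam x t α‖ ^ 2 - 2 * lam * a * ⟪x (t + 1), wpart lam x t α⟫)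
          / (2 * (lam * ((t : ℝ) + 1))) := by
  have ht' : (t : ℝ) ≠ 0 := by exact_mod_cast ht
  have hμ : lam * ((t : ℝ) + 1) ≠ 0 := mul_ne_zero hlam (by positivity)
  have hsucc := natCast_mul_Dpart lam x φ (Function.update α (t + 1) a) t.succ_ne_zero
  rw [sum_Icc_succ_top_update (by omega) (fun i b => -fconj (φ i) (-b)),
    wpart_succ_update lam x α (mul_ne_zero hlam ht') a, smul_add, smul_smul, smul_smul,
    norm_smul_add_smul_sq] at hsucc
  push_cast at hsucc
  rw [hsucc, natCast_mul_Dpart lam x φ α ht, half_mul_norm_add_inv_smul_sq hμ,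
    real_inner_comm]
  field_simp
  ring

end DualObjective

/-- Per-step inequality for Modified-SGD (key step of Theorem 3): the greedy
update of the `(t+1)`-st dual variable increases `(t+1) D_{t+1} - t D_t` by at
least `φ_{t+1}(x_{t+1}ᵀ w^(t)) + (λ/2)‖w^(t)‖² - 2L²/((t+1)λ)`. -/
theorem modified_sgd_step
    (d : ℕ) (x : ℕ → EuclideanSpace ℝ (Fin d))
    (φ : ℕ → ℝ → ℝ) (hconv : ∀ i, ConvexOn ℝ Set.univ (φ i))
    (lam : ℝ) (hlam : 0 < lam)
    (L : ℝ) (hL : ∀ i, ∀ a b : ℝ, |φ i a - φ i b| ≤ L * |a - b|)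
    (hx : ∀ i, ‖x i‖ ≤ 1)
    (t : ℕ) (ht : 1 ≤ t)
    (α : ℕ → ℝ) (hfeas : ∀ i ∈ Finset.Icc 1 t, FiniteConj (φ i) (-(α i)))
    (anew : ℝ) (hnew_feas : FiniteConj (φ (t + 1)) (-anew))
    (hnew_max : ∀ b : ℝ, FiniteConj (φ (t + 1)) (-b) →
      -(fconj (φ (t + 1)) (-b)) - lam * ((t : ℝ) + 1) / 2 *
          ‖wpart lam x t α + (1 / (lam * ((t : ℝ) + 1))) • b • x (t + 1)‖ ^ 2
        ≤ -(fconj (φ (t + 1)) (-anew)) - lam * ((t : ℝ) + 1) / 2 *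
          ‖wpart lam x t α + (1 / (lam * ((t : ℝ) + 1))) • anew • x (t + 1)‖ ^ 2) :
    φ (t + 1) ⟪x (t + 1), wpart lam x t α⟫ + lam / 2 * ‖wpart lam x t α‖ ^ 2
        - 2 * L ^ 2 / (((t : ℝ) + 1) * lam)
      ≤ ((t : ℝ) + 1) * Dpart lam x φ (t + 1) (Function.update α (t + 1) anew)
        - (t : ℝ) * Dpart lam x φ t α := by
  rw [succ_mul_Dpart_update_sub lam x φ α hlam.ne' (by omega)]
  set w := wpart lam x t α
  set X := x (t + 1)
  set μ := lam * ((t : ℝ) + 1)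
  have hμ : 0 < μ := by positivity
  obtain ⟨u, hu⟩ := (hconv (t + 1)).exists_subgradient ⟪X, w⟫
  have hmax := hnew_max (-u) (by rw [neg_neg]; exact finiteConj_of_subgradient hu)
  rw [neg_neg, fconj_eq_of_subgradient hu, half_mul_norm_add_inv_smul_sq hμ.ne', neg_sq] at hmax
  have hu_le : |u| ≤ L := abs_le_of_finiteConj (hL (t + 1)) (finiteConj_of_subgradient hu)
  have ha_le : |anew| ≤ L := by simpa using abs_le_of_finiteConj (hL (t + 1)) hnew_feas
  have hw_le : lam * ‖w‖ ≤ L := mul_norm_wpart_le lam x α hlam ht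
    (fun i hi => by simpa using abs_le_of_finiteConj (hL i) (hfeas i hi)) (fun i _ => hx i)
  have hcorr : u ^ 2 * ‖X‖ ^ 2 / (2 * μ) + (lam ^ 2 * ‖w‖ ^ 2 - 2 * lam * anew * ⟪X, w⟫) / (2 * μ)
      ≤ 2 * L ^ 2 / ((t + 1) * lam) := by
    rw [← add_div, show 2 * L ^ 2 / ((t + 1) * lam) = 4 * L ^ 2 / (2 * μ) by field_simp; ring]
    exact div_le_div_of_nonneg_right (sq_mul_norm_sq_add_sq_mul_norm_sq_sub_inner_le hlam.le
      (hx (t + 1)) hw_le hu_le ha_le) (by positivity)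
  linarith
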